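/- Let p, K ∈ ℕ⁺ and J_1,…,J_K ∈ ℕ⁺ with J = ∏_{k=1}^K J_k. There exists a linear transformation 𝒯 (namely the p-fold tensor product of the one-dimensional transformation) such that for every n ∈ ℕ⁺ and every finite data set x_1,…,x_n ∈ (0,1)^p, the array of standardized statistics C̄_{j⃗}(X) = (1/n)·Σ_{i=1}^n ∏_{l=1}^p c_{j_l}((x_i)_l), indexed by j⃗ = (j_1,…,j_p) ∈ {0,…,2J}^p, equals 𝒯 applied to the array of standardized statistics C̃̄^{j̲⃗}(X) = (1/n)·Σ_{i=1}^n ∏_{l=1}^p c̃^{j̲_l}((x_i)_l), indexed by j̲⃗ = (j̲_1,…,j̲_p) ∈ N_{J̲}^p. -/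
import Mathlib


/-- `cfun j x`: c₀(x)=1, c_{2j-1}(x)=cos((2j-1)x), c_{2j}(x)=sin((2j-1)x). -/
noncomputable def cfun (j : ℕ) (x : ℝ) : ℝ :=
  if j = 0 then 1
  else if j % 2 = 1 then Real.cos ((j : ℝ) * x)
  else Real.sin (((j : ℝ) - 1) * x)

/-- `csmall n z`: c^{2j−1}(z) = cos(z)^{2j−1}, c^{2j}(z) = sin(z)·cos(z)^{2j−2}, for n ≥ 1. -/
noncomputable def csmall (n : ℕ) (z : ℝ) : ℝ :=
  if n % 2 = 1 then (Real.cos z) ^ n else Real.sin z * (Real.cos z) ^ (n - 2)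

/-- The index set N_{J̲} = {0} ∪ ({1,…,2J₁}×{1,…,J₂}×…×{1,…,J_K}); the `none`
element plays the role of the index 0, and `some j` encodes the tuple whose kth entry
is `(j k).val + 1`. -/
def NIdx (K : ℕ) (Js : Fin K → ℕ) : Type :=
  Option ((k : Fin K) → Fin (if k.val = 0 then 2 * Js k else Js k))

/-- `Lfun Js k = ∏_{k' < k} J_{k'}` (the partial products L_k, 0-indexed). -/
def Lfun {K : ℕ} (Js : Fin K → ℕ) (k : ℕ) : ℕ :=
  ∏ k' ∈ Finset.univ.filter (fun k' : Fin K => k'.val < k), Js k'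

/-- `ctilde`: c̃^0(z) = 1 and, for j̲ = (j₁,…,j_K),
c̃^{j̲}(z) = c^{j₁}(z)·∏_{k=2}^K cos(2·L_{k−1}·z)^{j_k − 1}. -/
noncomputable def ctilde {K : ℕ} (Js : Fin K → ℕ) (hK : 0 < K)
    (j : NIdx K Js) (z : ℝ) : ℝ :=
  match j with
  | none => 1
  | some jv =>
      csmall ((jv ⟨0, hK⟩).val + 1) z *
        ∏ k ∈ Finset.univ.filter (fun k : Fin K => 0 < k.val),
          (Real.cos (2 * (Lfun Js k.val : ℝ) * z)) ^ (jv k).val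


namespace St18

noncomputable def mulF (g : ℝ → ℝ) : (ℝ → ℝ) →ₗ[ℝ] (ℝ → ℝ) where
  toFun f := fun z => g z * f z
  map_add' f₁ f₂ := by funext z; simp [mul_add]
  map_smul' c f := by funext z; simp [smul_eq_mul]; ring

lemma mulF_apply (g f : ℝ → ℝ) (z : ℝ) : mulF g f z = g z * f z := rfl

lemma span_mul_le {S : Set (ℝ → ℝ)} {W : Submodule ℝ (ℝ → ℝ)} (g : ℝ → ℝ)
    (h : ∀ f ∈ S, mulF g f ∈ W) {f : ℝ → ℝ} (hf : f ∈ Submodule.span ℝ S) :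
    mulF g f ∈ W := by
  have : Submodule.span ℝ S ≤ W.comap (mulF g) := by
    rw [Submodule.span_le]; exact fun f hf => h f hf
  exact this hf

lemma cos_id (A B : ℝ) : Real.cos (A + B) = 2 * Real.cos A * Real.cos B - Real.cos (A - B) := by
  rw [Real.cos_add, Real.cos_sub]; ring

lemma sin_id (A B : ℝ) : Real.sin (B + A) = 2 * Real.cos A * Real.sin B + Real.sin (A - B) := by
  rw [Real.sin_add, Real.sin_sub]; ring

lemma csmall_one (z : ℝ) : csmall 1 z = Real.cos z := by simp [csmall]
lemma csmall_two (z : ℝ) : csmall 2 z = Real.sin z := by norm_num [csmall]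

lemma csmall_add_two (m : ℕ) (hm : 1 ≤ m) (z : ℝ) :
    csmall (m + 2) z = Real.cos z ^ 2 * csmall m z := by
  rcases Nat.even_or_odd m with he | ho
  · have h2 : m % 2 = 0 := Nat.even_iff.mp he
    have h2' : (m + 2) % 2 = 0 := by omega
    have hm2 : 2 ≤ m := by omega
    simp only [csmall, h2, h2']
    norm_num
    conv_lhs => rw [show m = (m - 2) + 2 from by omega]
    rw [pow_add]; ring
  · have h1 : m % 2 = 1 := Nat.odd_iff.mp ho
    have h1' : (m + 2) % 2 = 1 := by omega
    simp only [csmall, h1, h1', if_pos]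
    rw [pow_add]; ring

noncomputable def Codd (s : ℕ) : ℝ → ℝ := fun z => Real.cos ((2 * s + 1 : ℕ) * z)
noncomputable def Sodd (s : ℕ) : ℝ → ℝ := fun z => Real.sin ((2 * s + 1 : ℕ) * z)

noncomputable def W1 (b : ℕ) : Submodule ℝ (ℝ → ℝ) :=
  Submodule.span ℝ {f | ∃ m, 1 ≤ m ∧ m ≤ b ∧ f = csmall m}

lemma W1_mono {b b' : ℕ} (h : b ≤ b') : W1 b ≤ W1 b' :=
  Submodule.span_mono (fun f ⟨m, h1, h2, h3⟩ => ⟨m, h1, le_trans h2 h, h3⟩)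

lemma csmall_mem {m b : ℕ} (h1 : 1 ≤ m) (h2 : m ≤ b) : csmall m ∈ W1 b :=
  Submodule.subset_span ⟨m, h1, h2, rfl⟩

lemma mul_cos_sq_W1 {b : ℕ} {f : ℝ → ℝ} (hf : f ∈ W1 b) :
    mulF (fun z => Real.cos z ^ 2) f ∈ W1 (b + 2) := by
  refine span_mul_le _ (fun g hg => ?_) hf
  obtain ⟨m, h1, h2, rfl⟩ := hg
  have : mulF (fun z => Real.cos z ^ 2) (csmall m) = csmall (m + 2) := by
    funext z; rw [mulF_apply, csmall_add_two m h1]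
  rw [this]
  exact csmall_mem (by omega) (by omega)

lemma base_lemma : ∀ s : ℕ, Codd s ∈ W1 (2 * s + 1) ∧ Sodd s ∈ W1 (2 * s + 2) := by
  intro s
  induction s using Nat.strong_induction_on with
  | _ s ih =>
    match s with
    | 0 =>
      constructor
      · have : Codd 0 = csmall 1 := by funext z; simp [Codd, csmall_one]
        rw [this]; exact csmall_mem le_rfl (by omega)
      · have : Sodd 0 = csmall 2 := by funext z; simp [Sodd, csmall_two]
        rw [this]; exact csmall_mem (by omega) le_rfl
    | 1 =>
      constructor
      · have h : Codd 1 = (4 : ℝ) • csmall 3 - (3 : ℝ) • csmall 1 := by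
          funext z
          have : Codd 1 z = Real.cos (3 * z) := by norm_num [Codd]
          rw [show ((4:ℝ) • csmall 3 - (3:ℝ) • csmall 1) z
              = 4 * csmall 3 z - 3 * csmall 1 z from rfl, this, Real.cos_three_mul,
            csmall_one]
          simp [csmall]
        rw [h]
        exact sub_mem (Submodule.smul_mem _ _ (csmall_mem (by omega) (by omega)))
          (Submodule.smul_mem _ _ (csmall_mem (by omega) (by omega)))
      · have h : Sodd 1 = (4 : ℝ) • csmall 4 - (1 : ℝ) • csmall 2 := by
          funext z
          have h1 : Sodd 1 z = Real.sin (3 * z) := by norm_num [Sodd]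
          rw [show ((4:ℝ) • csmall 4 - (1:ℝ) • csmall 2) z
              = 4 * csmall 4 z - 1 * csmall 2 z from rfl, h1, Real.sin_three_mul,
            csmall_two]
          have h4 : csmall 4 z = Real.sin z * Real.cos z ^ 2 := by norm_num [csmall]
          rw [h4]
          have h5 := Real.sin_sq_add_cos_sq z
          linear_combination (-4 * Real.sin z) * h5
        rw [h]
        exact sub_mem (Submodule.smul_mem _ _ (csmall_mem (by omega) (by omega)))
          (Submodule.smul_mem _ _ (csmall_mem (by omega) (by omega)))
    | (s' + 2) =>
      have ih1 := ih (s' + 1) (by omega)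
      have ih0 := ih s' (by omega)
      constructor
      · have hc : Codd (s' + 2) = (4 : ℝ) • mulF (fun z => Real.cos z ^ 2) (Codd (s' + 1))
            - (2 : ℝ) • Codd (s' + 1) - Codd s' := by
          funext z
          have e1 : ((2 * (s' + 2) + 1 : ℕ) : ℝ) * z = ((2 * (s' + 1) + 1 : ℕ) : ℝ) * z + 2 * z := by
            push_cast; ring
          have e2 : ((2 * (s' + 1) + 1 : ℕ) : ℝ) * z - 2 * z = ((2 * s' + 1 : ℕ) : ℝ) * z := by
            push_cast; ring
          simp only [Codd, Pi.sub_apply, Pi.smul_apply, smul_eq_mul, mulF_apply]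
          rw [e1, cos_id, e2, Real.cos_two_mul]
          ring
        rw [hc]
        refine sub_mem (sub_mem (Submodule.smul_mem _ _ ?_) (Submodule.smul_mem _ _ ?_)) ?_
        · exact W1_mono (by omega) (mul_cos_sq_W1 ih1.1)
        · exact W1_mono (by omega) ih1.1
        · exact W1_mono (by omega) ih0.1
      · have hs : Sodd (s' + 2) = (4 : ℝ) • mulF (fun z => Real.cos z ^ 2) (Sodd (s' + 1))
            - (2 : ℝ) • Sodd (s' + 1) - Sodd s' := by
          funext z
          have e1 : ((2 * (s' + 2) + 1 : ℕ) : ℝ) * z = ((2 * (s' + 1) + 1 : ℕ) : ℝ) * z + 2 * z := by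
            push_cast; ring
          have e2 : 2 * z - ((2 * (s' + 1) + 1 : ℕ) : ℝ) * z = -(((2 * s' + 1 : ℕ) : ℝ) * z) := by
            push_cast; ring
          simp only [Sodd, Pi.sub_apply, Pi.smul_apply, smul_eq_mul, mulF_apply]
          rw [e1, sin_id, e2, Real.sin_neg, Real.cos_two_mul]
          ring
        rw [hs]
        refine sub_mem (sub_mem (Submodule.smul_mem _ _ ?_) (Submodule.smul_mem _ _ ?_)) ?_
        · exact W1_mono (by omega) (mul_cos_sq_W1 ih1.2)
        · exact W1_mono (by omega) ih1.2
        · exact W1_mono (by omega) ih0.2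

lemma cos_mul_mem (u : ℝ) : ∀ q : ℕ,
    (fun z => Real.cos ((q : ℝ) * (u * z))) ∈
      Submodule.span ℝ {f | ∃ t ≤ q, f = fun z => Real.cos (u * z) ^ t} := by
  intro q
  induction q using Nat.strong_induction_on with
  | _ q ih =>
    match q with
    | 0 =>
      refine Submodule.subset_span ⟨0, le_rfl, ?_⟩
      funext z; simp
    | 1 =>
      refine Submodule.subset_span ⟨1, le_rfl, ?_⟩
      funext z; simp
    | (q + 2) =>
      have ih1 := ih (q + 1) (by omega)
      have ih0 := ih q (by omega)
      have key : (fun z => Real.cos (((q + 2 : ℕ) : ℝ) * (u * z)))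
          = (2 : ℝ) • mulF (fun z => Real.cos (u * z))
              (fun z => Real.cos (((q + 1 : ℕ) : ℝ) * (u * z)))
            - (fun z => Real.cos (((q : ℕ) : ℝ) * (u * z))) := by
        funext z
        have e1 : ((q + 2 : ℕ) : ℝ) * (u * z) = ((q + 1 : ℕ) : ℝ) * (u * z) + u * z := by
          push_cast; ring
        have e2 : ((q + 1 : ℕ) : ℝ) * (u * z) - u * z = ((q : ℕ) : ℝ) * (u * z) := by
          push_cast; ring
        simp only [Pi.sub_apply, Pi.smul_apply, smul_eq_mul, mulF_apply]
        rw [e1, cos_id, e2]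
        ring
      rw [key]
      refine sub_mem (Submodule.smul_mem _ _ ?_) ?_
      · refine span_mul_le _ (fun f hf => ?_) ih1
        obtain ⟨t, ht, rfl⟩ := hf
        refine Submodule.subset_span ⟨t + 1, by omega, ?_⟩
        funext z; rw [mulF_apply, pow_succ]; ring
      · refine Submodule.span_mono ?_ ih0
        rintro f ⟨t, ht, h⟩
        exact ⟨t, by omega, h⟩

def Lp (Js' : ℕ → ℕ) (k : ℕ) : ℕ := ∏ i ∈ Finset.range k, Js' i

noncomputable def gen (Js' : ℕ → ℕ) (k m : ℕ) (e : ℕ → ℕ) : ℝ → ℝ :=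
  fun z => csmall m z * ∏ i ∈ Finset.Ico 1 k, Real.cos (2 * (Lp Js' i : ℝ) * z) ^ e i

noncomputable def Wlev (Js' : ℕ → ℕ) (k : ℕ) : Submodule ℝ (ℝ → ℝ) :=
  Submodule.span ℝ {f | ∃ m e, 1 ≤ m ∧ m ≤ 2 * Js' 0 ∧
    (∀ i, 1 ≤ i → i < k → e i < Js' i) ∧ f = gen Js' k m e}

lemma mul_gen_step (Js' : ℕ → ℕ) {k t : ℕ} (hk : 1 ≤ k) (ht : t < Js' k)
    {f : ℝ → ℝ} (hf : f ∈ Wlev Js' k) :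
    mulF (fun z => Real.cos (2 * (Lp Js' k : ℝ) * z) ^ t) f ∈ Wlev Js' (k + 1) := by
  refine span_mul_le _ (fun g hg => ?_) hf
  obtain ⟨m, e, hm1, hm2, he, rfl⟩ := hg
  refine Submodule.subset_span ⟨m, Function.update e k t, hm1, hm2, ?_, ?_⟩
  · intro i hi1 hi2
    rcases eq_or_ne i k with rfl | hne
    · rwa [Function.update_self]
    · rw [Function.update_of_ne hne]
      exact he i hi1 (by omega)
  · funext z
    rw [mulF_apply]
    simp only [gen]
    rw [Finset.prod_Ico_succ_top hk]
    rw [Function.update_self]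
    have hprod : (∏ i ∈ Finset.Ico 1 k,
        Real.cos (2 * (Lp Js' i : ℝ) * z) ^ (Function.update e k t i))
        = ∏ i ∈ Finset.Ico 1 k, Real.cos (2 * (Lp Js' i : ℝ) * z) ^ e i := by
      refine Finset.prod_congr rfl (fun i hi => ?_)
      rw [Function.update_of_ne (by simp at hi; omega : i ≠ k)]
    rw [hprod]
    ring

lemma Wlev_mono (Js' : ℕ → ℕ) (hJ : ∀ i, 0 < Js' i) {k : ℕ} (hk : 1 ≤ k) :
    Wlev Js' k ≤ Wlev Js' (k + 1) := by
  intro f hf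
  have h := mul_gen_step Js' hk (hJ k) (t := 0) hf
  have heq : mulF (fun z => Real.cos (2 * (Lp Js' k : ℝ) * z) ^ 0) f = f := by
    funext z; rw [mulF_apply]; simp
  rwa [heq] at h

lemma W1_le_Wlev (Js' : ℕ → ℕ) : W1 (2 * Js' 0) ≤ Wlev Js' 1 := by
  refine Submodule.span_le.mpr ?_
  rintro f ⟨m, h1, h2, rfl⟩
  refine Submodule.subset_span ⟨m, fun _ => 0, h1, h2, by omega, ?_⟩
  funext z; simp [gen]

lemma main_level (Js' : ℕ → ℕ) (hJ : ∀ i, 0 < Js' i) :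
    ∀ k, 1 ≤ k → ∀ s, s < Lp Js' k → Codd s ∈ Wlev Js' k ∧ Sodd s ∈ Wlev Js' k := by
  intro k
  induction k with
  | zero => intro hk; exact absurd hk (by norm_num)
  | succ k ihk =>
    intro _
    rcases Nat.eq_zero_or_pos k with rfl | hk
    · intro s hs
      have hs1 : s < Js' 0 := by simpa [Lp] using hs
      have hb := base_lemma s
      constructor
      · exact W1_le_Wlev Js' (W1_mono (by omega) hb.1)
      · exact W1_le_Wlev Js' (W1_mono (by omega) hb.2)
    · intro s
      induction s using Nat.strong_induction_on with
      | _ s ihs =>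
        intro hs
        have hik := ihk hk
        have hLpos : 0 < Lp Js' k := Finset.prod_pos (fun i _ => hJ i)
        have hLp1 : Lp Js' (k + 1) = Lp Js' k * Js' k := Finset.prod_range_succ _ _
        set L := Lp Js' k with hL
        set q := s / L with hq
        set r := s % L with hr
        have hrL : r < L := Nat.mod_lt _ hLpos
        have hqs : L * q + r = s := Nat.div_add_mod s L
        have hqJ : q < Js' k := by
          rw [hq]
          refine (Nat.div_lt_iff_lt_mul hLpos).mpr ?_
          rw [mul_comm]
          rw [hLp1] at hs
          exact hs
        rcases Nat.eq_zero_or_pos q with hq0 | hqpos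
        · have hsr : s = r := by rw [hq0, mul_zero, zero_add] at hqs; exact hqs.symm
          have hsL : s < L := by rw [hsr]; exact hrL
          have h := hik s hsL
          exact ⟨Wlev_mono Js' hJ hk h.1, Wlev_mono Js' hJ hk h.2⟩
        · set s' := q * L - (r + 1) with hs'def
          have hr1 : r + 1 ≤ q * L :=
            le_trans (Nat.succ_le_of_lt hrL) (Nat.le_mul_of_pos_left L hqpos)
          have hs'q : s' + (r + 1) = q * L := Nat.sub_add_cancel hr1
          have hqLs : q * L ≤ s := by rw [mul_comm]; exact Nat.le.intro hqs
          have hs's : s' < s :=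
            lt_of_lt_of_le (Nat.sub_lt (Nat.lt_of_lt_of_le (Nat.succ_pos r) hr1) (Nat.succ_pos r)) hqLs
          have ihs' := ihs s' hs's (lt_trans hs's hs)
          have hsR : ((L : ℝ)) * q + r = (s : ℝ) := by exact_mod_cast congrArg (Nat.cast (R := ℝ)) hqs
          have hs'R : ((s' : ℝ)) + (r + 1) = (q : ℝ) * L := by exact_mod_cast congrArg (Nat.cast (R := ℝ)) hs'q
          have hP := cos_mul_mem (2 * (L : ℝ)) q
          have hmulC : mulF (Codd r) (fun z => Real.cos ((q : ℝ) * (2 * (L : ℝ) * z)))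
              ∈ Wlev Js' (k + 1) := by
            refine span_mul_le _ (fun f hf => ?_) hP
            obtain ⟨t, ht, rfl⟩ := hf
            have h1 := mul_gen_step Js' hk (show t < Js' k by omega) (hik r hrL).1
            have heq : mulF (Codd r) (fun z => Real.cos (2 * (L : ℝ) * z) ^ t)
                = mulF (fun z => Real.cos (2 * (Lp Js' k : ℝ) * z) ^ t) (Codd r) := by
              funext z; simp only [mulF_apply, ← hL]; ring
            rw [heq]; exact h1
          have hmulS : mulF (Sodd r) (fun z => Real.cos ((q : ℝ) * (2 * (L : ℝ) * z)))
              ∈ Wlev Js' (k + 1) := by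
            refine span_mul_le _ (fun f hf => ?_) hP
            obtain ⟨t, ht, rfl⟩ := hf
            have h1 := mul_gen_step Js' hk (show t < Js' k by omega) (hik r hrL).2
            have heq : mulF (Sodd r) (fun z => Real.cos (2 * (L : ℝ) * z) ^ t)
                = mulF (fun z => Real.cos (2 * (Lp Js' k : ℝ) * z) ^ t) (Sodd r) := by
              funext z; simp only [mulF_apply, ← hL]; ring
            rw [heq]; exact h1
          constructor
          · have hCid : Codd s = (2 : ℝ) • mulF (Codd r)
                (fun z => Real.cos ((q : ℝ) * (2 * (L : ℝ) * z))) - Codd s' := by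
              funext z
              simp only [Codd, Pi.sub_apply, Pi.smul_apply, smul_eq_mul, mulF_apply]
              have e1 : ((2 * s + 1 : ℕ) : ℝ) * z
                  = (q : ℝ) * (2 * (L : ℝ) * z) + ((2 * r + 1 : ℕ) : ℝ) * z := by
                push_cast
                linear_combination (-2 * z) * hsR
              have e2 : (q : ℝ) * (2 * (L : ℝ) * z) - ((2 * r + 1 : ℕ) : ℝ) * z
                  = ((2 * s' + 1 : ℕ) : ℝ) * z := by
                push_cast
                linear_combination (-2 * z) * hs'R
              rw [e1, cos_id, e2]
              ring
            rw [hCid]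
            exact sub_mem (Submodule.smul_mem _ _ hmulC) ihs'.1
          · have hSid : Sodd s = (2 : ℝ) • mulF (Sodd r)
                (fun z => Real.cos ((q : ℝ) * (2 * (L : ℝ) * z))) + Sodd s' := by
              funext z
              simp only [Sodd, Pi.add_apply, Pi.smul_apply, smul_eq_mul, mulF_apply]
              have e1 : ((2 * s + 1 : ℕ) : ℝ) * z
                  = ((2 * r + 1 : ℕ) : ℝ) * z + (q : ℝ) * (2 * (L : ℝ) * z) := by
                push_cast
                linear_combination (-2 * z) * hsR
              have e2 : (q : ℝ) * (2 * (L : ℝ) * z) - ((2 * r + 1 : ℕ) : ℝ) * z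
                  = ((2 * s' + 1 : ℕ) : ℝ) * z := by
                push_cast
                linear_combination (-2 * z) * hs'R
              rw [e1, sin_id, e2]
              ring
            rw [hSid]
            exact add_mem (Submodule.smul_mem _ _ hmulS) ihs'.2


lemma prod_filter_pos_eq {M : Type*} [CommMonoid M] (K : ℕ) (F : ℕ → M) :
    (∏ k ∈ Finset.univ.filter (fun k : Fin K => 0 < k.val), F k.val)
      = ∏ i ∈ Finset.Ico 1 K, F i := by
  rw [Finset.prod_filter]
  rw [Fin.prod_univ_eq_prod_range (fun i => if 0 < i then F i else 1) K]
  have h1 : ∏ i ∈ Finset.range K, (if 0 < i then F i else 1)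
      = ∏ i ∈ Finset.Ico 1 K, (if 0 < i then F i else 1) := by
    refine (Finset.prod_subset (fun i hi => ?_) (fun i hi hni => ?_)).symm
    · simp only [Finset.mem_Ico, Finset.mem_range] at hi ⊢; omega
    · simp only [Finset.mem_Ico, Finset.mem_range] at hi hni
      have : i = 0 := by omega
      simp [this]
  rw [h1]
  exact Finset.prod_congr rfl (fun i hi => by
    simp only [Finset.mem_Ico] at hi; rw [if_pos (by omega)])

lemma prod_filter_lt_eq {M : Type*} [CommMonoid M] (K i0 : ℕ) (h : i0 ≤ K) (F : ℕ → M) :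
    (∏ k ∈ Finset.univ.filter (fun k : Fin K => k.val < i0), F k.val)
      = ∏ i ∈ Finset.range i0, F i := by
  rw [Finset.prod_filter]
  rw [Fin.prod_univ_eq_prod_range (fun i => if i < i0 then F i else 1) K]
  have h1 : ∏ i ∈ Finset.range K, (if i < i0 then F i else 1)
      = ∏ i ∈ Finset.range i0, (if i < i0 then F i else 1) := by
    refine (Finset.prod_subset (fun i hi => ?_) (fun i hi hni => ?_)).symm
    · simp only [Finset.mem_range] at hi ⊢; omega
    · simp only [Finset.mem_range] at hi hni
      rw [if_neg (by omega)]
  rw [h1]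
  exact Finset.prod_congr rfl (fun i hi => by
    simp only [Finset.mem_range] at hi; rw [if_pos hi])

end St18

noncomputable instance {K : ℕ} {Js : Fin K → ℕ} : Fintype (NIdx K Js) := by
  unfold NIdx; infer_instance

namespace St18

variable {K : ℕ} (Js : Fin K → ℕ) (hK : 0 < K)

/-- the extension of `Js` to `ℕ`. -/
def Jext : ℕ → ℕ := fun i => if h : i < K then Js ⟨i, h⟩ else 1

lemma Jext_pos (hJs : ∀ k, 0 < Js k) : ∀ i, 0 < Jext Js i := by
  intro i
  unfold Jext
  split
  · exact hJs _
  · norm_num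

lemma Jext_eq {i : ℕ} (h : i < K) : Jext Js i = Js ⟨i, h⟩ := dif_pos h

lemma Jext_fin (k : Fin K) : Jext Js k.val = Js k := by
  rw [Jext_eq Js k.isLt]

lemma Lfun_eq {i : ℕ} (h : i ≤ K) : Lfun Js i = Lp (Jext Js) i := by
  unfold Lfun Lp
  rw [Finset.prod_congr rfl (fun k _ => (Jext_fin Js k).symm)]
  exact prod_filter_lt_eq K i h (Jext Js)

lemma prod_eq_LpK : (∏ k, Js k) = Lp (Jext Js) K := by
  unfold Lp
  rw [← Fin.prod_univ_eq_prod_range (Jext Js) K]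
  exact Finset.prod_congr rfl (fun k _ => (Jext_fin Js k).symm)

/-- span of the ctilde family. -/
noncomputable def Wfull : Submodule ℝ (ℝ → ℝ) :=
  Submodule.span ℝ (Set.range (ctilde Js hK))

lemma one_mem_Wfull : (fun _ : ℝ => (1 : ℝ)) ∈ Wfull Js hK :=
  Submodule.subset_span ⟨none, rfl⟩

lemma gen_mem_Wfull (m : ℕ) (e : ℕ → ℕ) (hm1 : 1 ≤ m) (hm2 : m ≤ 2 * Jext Js 0)
    (he : ∀ i, 1 ≤ i → i < K → e i < Jext Js i) :
    gen (Jext Js) K m e ∈ Wfull Js hK := by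
  have hJ0 : Jext Js 0 = Js ⟨0, hK⟩ := Jext_eq Js hK
  refine Submodule.subset_span ⟨some (fun k =>
    ⟨if k.val = 0 then m - 1 else e k.val, ?_⟩), ?_⟩
  · split_ifs with h
    · have hk0 : k = ⟨0, hK⟩ := Fin.ext h
      rw [hk0, ← hJ0]
      omega
    · rw [← Jext_fin Js k]
      exact he k.val (by omega) k.isLt
  · funext z
    simp only [ctilde]
    have hv0 : ((⟨0, hK⟩ : Fin K).val = 0) := rfl
    simp only [hv0, if_pos]
    rw [Nat.sub_add_cancel hm1]
    unfold gen
    congr 1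
    have hcongr : (∏ k ∈ Finset.univ.filter (fun k : Fin K => 0 < k.val),
          Real.cos (2 * (Lfun Js k.val : ℝ) * z) ^
            (if k.val = 0 then m - 1 else e k.val))
        = ∏ k ∈ Finset.univ.filter (fun k : Fin K => 0 < k.val),
            (fun i => Real.cos (2 * (Lp (Jext Js) i : ℝ) * z) ^ e i) k.val := by
      refine Finset.prod_congr rfl (fun k hk => ?_)
      simp only [Finset.mem_filter] at hk
      rw [if_neg (by omega), Lfun_eq Js (le_of_lt k.isLt)]
    rw [hcongr]
    exact prod_filter_pos_eq K (fun i => Real.cos (2 * (Lp (Jext Js) i : ℝ) * z) ^ e i)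

lemma Wlev_le_Wfull : Wlev (Jext Js) K ≤ Wfull Js hK := by
  refine Submodule.span_le.mpr ?_
  rintro f ⟨m, e, hm1, hm2, he, rfl⟩
  exact gen_mem_Wfull Js hK m e hm1 hm2 (fun i h1 h2 => he i h1 h2)

lemma cfun_mem_Wfull (hJs : ∀ k, 0 < Js k) (j : ℕ) (hj : j ≤ 2 * ∏ k, Js k) :
    cfun j ∈ Wfull Js hK := by
  have hJK : (∏ k, Js k) = Lp (Jext Js) K := prod_eq_LpK Js
  have hml := main_level (Jext Js) (Jext_pos Js hJs) K hK
  rcases Nat.eq_zero_or_pos j with rfl | hjpos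
  · have : cfun 0 = ctilde Js hK none := by
      funext z; simp [cfun, ctilde]
    rw [this]
    exact Submodule.subset_span ⟨none, rfl⟩
  rcases Nat.even_or_odd j with he | ho
  · -- j even, j ≥ 2 : sin((j-1)x) = Sodd ((j-2)/2)
    have h2 : j % 2 = 0 := Nat.even_iff.mp he
    obtain ⟨s, hs⟩ : ∃ s, j = 2 * s + 2 := ⟨(j - 2) / 2, by omega⟩
    have hsJ : s < Lp (Jext Js) K := by rw [← hJK]; omega
    have : cfun j = Sodd s := by
      funext z
      have h0 : ¬ j = 0 := by omega
      have h1 : ¬ j % 2 = 1 := by omega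
      simp only [cfun, if_neg h0, if_neg h1, Sodd]
      have hjr : (j : ℝ) = 2 * (s : ℝ) + 2 := by exact_mod_cast hs
      congr 1
      push_cast
      rw [hjr]
      ring
    rw [this]
    exact Wlev_le_Wfull Js hK ((hml s hsJ).2)
  · -- j odd : cos(j x) = Codd (j/2)
    have h1 : j % 2 = 1 := Nat.odd_iff.mp ho
    obtain ⟨s, hs⟩ : ∃ s, j = 2 * s + 1 := ⟨j / 2, by omega⟩
    have hsJ : s < Lp (Jext Js) K := by rw [← hJK]; omega
    have : cfun j = Codd s := by
      funext z
      have h0 : ¬ j = 0 := by omega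
      simp only [cfun, if_neg h0, if_pos h1, Codd]
      have hjr : (j : ℝ) = ((2 * s + 1 : ℕ) : ℝ) := by exact_mod_cast hs
      rw [hjr]
    rw [this]
    exact Wlev_le_Wfull Js hK ((hml s hsJ).1)

end St18

/-- there is a fixed linear transformation 𝒯 (the p-fold tensor power of
the one-dimensional transformation), independent of the data and of n, sending the array
of standardized statistics C̃̄^{j̲⃗}(X) = (1/n)Σ_i ∏_l c̃^{j̲_l}((x_i)_l) to the array of
standardized statistics C̄_{j⃗}(X) = (1/n)Σ_i ∏_l c_{j_l}((x_i)_l) for every data set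
x_1,…,x_n ∈ (0,1)^p. -/
theorem exists_linear_transform_statistics (p K : ℕ) (hp : 0 < p) (hK : 0 < K)
    (Js : Fin K → ℕ) (hJs : ∀ k, 0 < Js k) :
    ∃ 𝒯 : ((Fin p → NIdx K Js) → ℝ) →ₗ[ℝ]
        ((Fin p → Fin (2 * (∏ k, Js k) + 1)) → ℝ),
      ∀ (n : ℕ), 0 < n → ∀ x : Fin n → (Fin p → ℝ),
        (∀ i l, x i l ∈ Set.Ioo (0 : ℝ) 1) →
        𝒯 (fun v => (1 / (n : ℝ)) * ∑ i, ∏ l, ctilde Js hK (v l) (x i l)) =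
          fun w => (1 / (n : ℝ)) * ∑ i, ∏ l, cfun (w l).val (x i l) := by
  classical
  have hrep : ∀ w : Fin (2 * (∏ k, Js k) + 1), ∃ c : NIdx K Js → ℝ,
      ∑ v, c v • ctilde Js hK v = cfun w.val := by
    intro w
    have hmem : cfun w.val ∈ St18.Wfull Js hK :=
      St18.cfun_mem_Wfull Js hK hJs w.val (by omega)
    exact (Submodule.mem_span_range_iff_exists_fun ℝ).mp hmem
  choose a ha using hrep
  have hpt : ∀ (w : Fin (2 * (∏ k, Js k) + 1)) (z : ℝ),
      ∑ u, a w u * ctilde Js hK u z = cfun w.val z := by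
    intro w z
    have := congrFun (ha w) z
    simpa [Finset.sum_apply] using this
  refine ⟨{ toFun := fun F w => ∑ v : Fin p → NIdx K Js, (∏ l, a (w l) (v l)) * F v,
            map_add' := ?_, map_smul' := ?_ }, ?_⟩
  · intro F G
    funext w
    simp [mul_add, Finset.sum_add_distrib]
  · intro c F
    funext w
    simp only [smul_eq_mul, RingHom.id_apply, Pi.smul_apply]
    rw [Finset.mul_sum]
    exact Finset.sum_congr rfl (fun v _ => by ring)
  · intro n hn x hx
    funext w
    show ∑ v : Fin p → NIdx K Js, (∏ l, a (w l) (v l)) *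
        ((1 / (n : ℝ)) * ∑ i, ∏ l, ctilde Js hK (v l) (x i l))
      = (1 / (n : ℝ)) * ∑ i, ∏ l, cfun (w l).val (x i l)
    calc ∑ v : Fin p → NIdx K Js, (∏ l, a (w l) (v l)) *
          ((1 / (n : ℝ)) * ∑ i, ∏ l, ctilde Js hK (v l) (x i l))
        = (1 / (n : ℝ)) * ∑ v : Fin p → NIdx K Js, ∑ i,
            ∏ l, (a (w l) (v l) * ctilde Js hK (v l) (x i l)) := by
          rw [Finset.mul_sum]
          refine Finset.sum_congr rfl (fun v _ => ?_)
          have : ∑ i, ∏ l, (a (w l) (v l) * ctilde Js hK (v l) (x i l))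
              = (∏ l, a (w l) (v l)) * ∑ i, ∏ l, ctilde Js hK (v l) (x i l) := by
            rw [Finset.mul_sum]
            exact Finset.sum_congr rfl (fun i _ => Finset.prod_mul_distrib)
          rw [this]
          ring
      _ = (1 / (n : ℝ)) * ∑ i, ∑ v : Fin p → NIdx K Js,
            ∏ l, (a (w l) (v l) * ctilde Js hK (v l) (x i l)) := by
          rw [Finset.sum_comm]
      _ = (1 / (n : ℝ)) * ∑ i, ∏ l, ∑ u : NIdx K Js,
            (a (w l) u * ctilde Js hK u (x i l)) := by
          congr 1
          refine Finset.sum_congr rfl (fun i _ => ?_)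
          exact (Fintype.prod_sum
            (κ := fun _ : Fin p => NIdx K Js)
            (fun l u => a (w l) u * ctilde Js hK u (x i l))).symm
      _ = (1 / (n : ℝ)) * ∑ i, ∏ l, cfun (w l).val (x i l) := by
          congr 1
          refine Finset.sum_congr rfl (fun i _ => ?_)
          exact Finset.prod_congr rfl (fun l _ => hpt (w l) (x i l))
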